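/- arXiv:1312.2078 — 3 statements merged into one kernel-verified Lean document; each statement's English description precedes it below -/
import Mathlib

section
/- Let (U,·) be a left symmetric algebra and Φ(U) = U ⊕ U* with the symmetric pairing ⟨u+α, v+β⟩₀ = α(v) + β(u). Then the bracket [X+α, Y+β]^▷ = [X,Y] − L_X^t β + L_Y^t α makes (Φ(U), [·,·]^▷, ⟨·,·⟩₀) a flat pseudo-Riemannian Lie algebra: the product ▷ given by (X+α) ▷ (Y+β) = X·Y − L_X^t β is Lie-admissible with commutator [·,·]^▷, each left multiplication by ▷ is skew-symmetric with respect to ⟨·,·⟩₀, and ▷ satisfies the Koszul formula 2⟨a▷b,c⟩₀ = ⟨[a,b]^▷,c⟩₀ + ⟨[c,a]^▷,b⟩₀ + ⟨[c,b]^▷,a⟩₀, i.e., ▷ is the Levi-Civita product of ⟨·,·⟩₀ and it is left symmetric (flat). -/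
/-!
The product `▷` has commutator `[·,·]^▷` and its left multiplications are
`⟨·,·⟩₀`-skew by direct computation: the transpose term `−L_X^t β` is exactly what
makes `L^▷_{X+α}` skew. The Koszul formula then follows by the usual uniqueness
argument for Levi-Civita products. On `U` the left symmetry of `▷` is that of `U`;
on `U*` it is the transpose of `L_{[X,Y]} = [L_X, L_Y]`, which is left symmetry of
`U` again. Jacobi for `[·,·]^▷` holds because the commutator of any left symmetric
product satisfies it.
-/

variable {k U : Type*} [Field k] [AddCommGroup U] [Module k U]

def pkBracket (mul : U →ₗ[k] U →ₗ[k] U) (a b : U) : U := mul a b - mul b a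

/-- The product `(X+α) ▷ (Y+β) = X·Y − L_X^t β` on the phase space `Φ(U) = U ⊕ U*`. -/
def phaseProd (mul : U →ₗ[k] U →ₗ[k] U)
    (p q : U × Module.Dual k U) : U × Module.Dual k U :=
  (mul p.1 q.1, - (mul p.1).dualMap q.2)

/-- The bracket `[X+α, Y+β]^▷ = [X,Y] − L_X^t β + L_Y^t α` on `Φ(U)`. -/
def phaseBr (mul : U →ₗ[k] U →ₗ[k] U)
    (p q : U × Module.Dual k U) : U × Module.Dual k U :=
  (pkBracket mul p.1 q.1, - (mul p.1).dualMap q.2 + (mul q.1).dualMap p.2)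

/-- The canonical hyperbolic symmetric pairing `⟨u+α, v+β⟩₀ = α(v) + β(u)` on `Φ(U)`. -/
def phasePair (p q : U × Module.Dual k U) : k := p.2 q.1 + q.2 p.1

theorem LinearMap.BilinForm.IsSymm.koszul_formula
    {R A : Type*} [CommRing R] [AddCommGroup A] [Module R A]
    {B : LinearMap.BilinForm R A} (hB : B.IsSymm)
    {m br : A → A → A} (hbr : ∀ a b, m a b - m b a = br a b)
    (hskew : ∀ a b c, B (m a b) c + B b (m a c) = 0) (a b c : A) :
    2 * B (m a b) c = B (br a b) c + B (br c a) b + B (br c b) a := by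
  simp only [← hbr, map_sub, LinearMap.sub_apply]
  linear_combination hskew a b c + hskew b a c - hskew c a b + hB.eq (m a c) b + hB.eq (m b c) a
    - hB.eq (m c b) a

def IsLeftSymmetric (mul : U →ₗ[k] U →ₗ[k] U) : Prop :=
  ∀ u v w, mul (mul u v) w - mul u (mul v w) = mul (mul v u) w - mul v (mul u w)

namespace IsLeftSymmetric

variable {mul : U →ₗ[k] U →ₗ[k] U}

theorem pkBracket_jacobi (h : IsLeftSymmetric mul) (a b c : U) :
    pkBracket mul a (pkBracket mul b c) + pkBracket mul b (pkBracket mul c a) +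
      pkBracket mul c (pkBracket mul a b) = 0 := by
  simp only [pkBracket, map_sub, LinearMap.sub_apply]
  linear_combination (norm := module) -(h a b c) - h b c a - h c a b

theorem mul_pkBracket (h : IsLeftSymmetric mul) (u v : U) :
    mul (pkBracket mul u v) = mul u ∘ₗ mul v - mul v ∘ₗ mul u := by
  ext w
  simp only [pkBracket, map_sub, LinearMap.sub_apply, LinearMap.comp_apply]
  exact sub_eq_sub_iff_sub_eq_sub.mp (h u v w)

end IsLeftSymmetric

def phaseProdBilin (mul : U →ₗ[k] U →ₗ[k] U) :
    (U × Module.Dual k U) →ₗ[k] (U × Module.Dual k U) →ₗ[k] (U × Module.Dual k U) :=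
  LinearMap.mk₂ k (phaseProd mul)
    (fun _ _ _ => by ext <;> simp [phaseProd, add_comm])
    (fun _ _ _ => by ext <;> simp [phaseProd])
    (fun _ _ _ => by ext <;> simp [phaseProd, add_comm])
    (fun _ _ _ => by ext <;> simp [phaseProd])

@[simp]
theorem phaseProdBilin_apply (mul : U →ₗ[k] U →ₗ[k] U) (p q : U × Module.Dual k U) :
    phaseProdBilin mul p q = phaseProd mul p q := rfl

def phasePairBilin : LinearMap.BilinForm k (U × Module.Dual k U) :=
  LinearMap.mk₂ k phasePair
    (fun _ _ _ => by simp [phasePair]; ring)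
    (fun _ _ _ => by simp [phasePair]; ring)
    (fun _ _ _ => by simp [phasePair]; ring)
    (fun _ _ _ => by simp [phasePair]; ring)

theorem phasePairBilin_isSymm : (phasePairBilin (k := k) (U := U)).IsSymm :=
  ⟨fun _ _ => add_comm _ _⟩

section

variable (mul : U →ₗ[k] U →ₗ[k] U)

theorem phaseProd_sub_phaseProd (p q : U × Module.Dual k U) :
    phaseProd mul p q - phaseProd mul q p = phaseBr mul p q := by
  ext
  · rfl
  · simp [phaseProd, phaseBr]

theorem phaseBr_eq_pkBracket : phaseBr mul = pkBracket (phaseProdBilin mul) := by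
  funext p q
  exact (phaseProd_sub_phaseProd mul p q).symm

theorem phasePair_phaseProd_add_phasePair_phaseProd (p q r : U × Module.Dual k U) :
    phasePair (phaseProd mul p q) r + phasePair q (phaseProd mul p r) = 0 := by
  simp only [phasePair, phaseProd, LinearMap.neg_apply, LinearMap.dualMap_apply]
  ring

end

theorem IsLeftSymmetric.phaseProdBilin {mul : U →ₗ[k] U →ₗ[k] U} (h : IsLeftSymmetric mul) :
    IsLeftSymmetric (phaseProdBilin mul) := by
  intro p q r
  ext w
  · exact h p.1 q.1 r.1
  · have hrep := congrArg (fun f : U →ₗ[k] U => r.2 (f w)) (h.mul_pkBracket p.1 q.1)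
    simp only [pkBracket, map_sub, LinearMap.sub_apply, LinearMap.comp_apply] at hrep
    simp only [phaseProdBilin_apply, phaseProd, map_neg, LinearMap.dualMap_apply, Prod.snd_sub,
      LinearMap.sub_apply, LinearMap.neg_apply]
    linear_combination -hrep

theorem phasePair_flat_pseudoRiemannian_general
    (mul : U →ₗ[k] U →ₗ[k] U)
    (hls : ∀ u v w : U,
      mul (mul u v) w - mul u (mul v w) = mul (mul v u) w - mul v (mul u w)) :
    (∀ p q : U × Module.Dual k U,
      phaseProd mul p q - phaseProd mul q p = phaseBr mul p q) ∧
    (∀ p q r : U × Module.Dual k U,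
      phaseBr mul p (phaseBr mul q r) + phaseBr mul q (phaseBr mul r p) +
        phaseBr mul r (phaseBr mul p q) = 0) ∧
    (∀ p q r : U × Module.Dual k U,
      phasePair (k := k) (phaseProd mul p q) r + phasePair q (phaseProd mul p r) = 0) ∧
    (∀ p q r : U × Module.Dual k U,
      2 * phasePair (k := k) (phaseProd mul p q) r
        = phasePair (k := k) (phaseBr mul p q) r + phasePair (k := k) (phaseBr mul r p) q +
          phasePair (k := k) (phaseBr mul r q) p) ∧
    (∀ p q r : U × Module.Dual k U,
      phaseProd mul (phaseProd mul p q) r - phaseProd mul p (phaseProd mul q r)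
        = phaseProd mul (phaseProd mul q p) r - phaseProd mul q (phaseProd mul p r)) := by
  have hflat : IsLeftSymmetric (phaseProdBilin mul) := IsLeftSymmetric.phaseProdBilin hls
  refine ⟨phaseProd_sub_phaseProd mul, ?_, phasePair_phaseProd_add_phasePair_phaseProd mul,
    phasePairBilin_isSymm.koszul_formula (phaseProd_sub_phaseProd mul)
      (phasePair_phaseProd_add_phasePair_phaseProd mul), hflat⟩
  rw [phaseBr_eq_pkBracket]
  exact hflat.pkBracket_jacobi

/-- `(Φ(U), [·,·]^▷, ⟨·,·⟩₀)` is a flat pseudo-Riemannian Lie algebra: the commutator of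
`▷` is `[·,·]^▷` which satisfies the Jacobi identity, left ▷-multiplications are
skew-symmetric for `⟨·,·⟩₀`, `▷` satisfies the Koszul formula (so it is the Levi-Civita
product of `⟨·,·⟩₀`), and `▷` is left symmetric (flat). -/
theorem phasePair_flat_pseudoRiemannian [FiniteDimensional k U]
    (h2 : (2 : k) ≠ 0)
    (mul : U →ₗ[k] U →ₗ[k] U)
    (hls : ∀ u v w : U,
      mul (mul u v) w - mul u (mul v w) = mul (mul v u) w - mul v (mul u w)) :
    (∀ p q : U × Module.Dual k U,
      phaseProd mul p q - phaseProd mul q p = phaseBr mul p q) ∧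
    (∀ p q r : U × Module.Dual k U,
      phaseBr mul p (phaseBr mul q r) + phaseBr mul q (phaseBr mul r p) +
        phaseBr mul r (phaseBr mul p q) = 0) ∧
    (∀ p q r : U × Module.Dual k U,
      phasePair (k := k) (phaseProd mul p q) r + phasePair q (phaseProd mul p r) = 0) ∧
    (∀ p q r : U × Module.Dual k U,
      2 * phasePair (k := k) (phaseProd mul p q) r
        = phasePair (k := k) (phaseBr mul p q) r + phasePair (k := k) (phaseBr mul r p) q +
          phasePair (k := k) (phaseBr mul r q) p) ∧
    (∀ p q r : U × Module.Dual k U,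
      phaseProd mul (phaseProd mul p q) r - phaseProd mul p (phaseProd mul q r)
        = phaseProd mul (phaseProd mul q p) r - phaseProd mul q (phaseProd mul p r)) :=
  phasePair_flat_pseudoRiemannian_general mul hls
end

section
/- Let (U,·,ω) be a symplectic associative algebra (associative product with nondegenerate skew ω satisfying ω(u·v,w) + ω(v,u·w) = 0). Then U⁴ = 0, i.e., any product of four elements (in any parenthesization) vanishes: u·(v·(w·x)) = 0 for all u,v,w,x ∈ U. -/
/-!
Invariance of `ω` says every left multiplication `L_a` is `ω`-skew-adjoint, and associativity says
`L_{ab} = L_a L_b`. The adjoint of `L_{ab}` is then both `-L_{ab}` and `L_b L_a = L_{ba}`, so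
`L_{ab} = -L_{ba}` by nondegeneracy. Moving the factors of `L_{(uv)w}` around cyclically with this
rule three times gives `L_{(uv)w} = -L_{(uv)w}`, hence `L_{(uv)w} = 0` when `2` is invertible.
-/

section

variable {R M : Type*} [CommRing R] [AddCommGroup M] [Module R M]
  {mul : M →ₗ[R] M →ₗ[R] M} {ω : M →ₗ[R] M →ₗ[R] R}

theorem form_mul_mul_apply_eq_form_mul_apply_mul_apply
    (hassoc : ∀ u v w : M, mul (mul u v) w = mul u (mul v w))
    (hinv : ∀ u v w : M, ω (mul u v) w + ω v (mul u w) = 0) (a b t s : M) :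
    ω (mul (mul a b) t) s = ω (mul a t) (mul b s) := by
  have hab := hinv (mul a b) t s
  have ha := hinv a t (mul b s)
  rw [hassoc a b s] at hab
  linear_combination hab - ha

theorem mul_mul_apply_eq_neg_mul_mul_swap_apply
    (hassoc : ∀ u v w : M, mul (mul u v) w = mul u (mul v w))
    (hnd : ω.SeparatingLeft)
    (hinv : ∀ u v w : M, ω (mul u v) w + ω v (mul u w) = 0) (a b t : M) :
    mul (mul a b) t = -mul (mul b a) t := by
  refine eq_neg_of_add_eq_zero_left (hnd _ fun s => ?_)
  rw [map_add, LinearMap.add_apply, form_mul_mul_apply_eq_form_mul_apply_mul_apply hassoc hinv,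
    hassoc, add_comm, hinv]

theorem mul_mul_mul_apply_eq_neg_self
    (hassoc : ∀ u v w : M, mul (mul u v) w = mul u (mul v w))
    (hnd : ω.SeparatingLeft)
    (hinv : ∀ u v w : M, ω (mul u v) w + ω v (mul u w) = 0) (u v w x : M) :
    mul (mul (mul u v) w) x = -mul (mul (mul u v) w) x := by
  have anticomm := mul_mul_apply_eq_neg_mul_mul_swap_apply hassoc hnd hinv
  calc mul (mul (mul u v) w) x
      = -mul (mul (mul w u) v) x := by rw [anticomm (mul u v), hassoc w u v]
    _ = mul (mul (mul v w) u) x := by rw [anticomm (mul w u), hassoc v w u, neg_neg]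
    _ = -mul (mul (mul u v) w) x := by rw [anticomm (mul v w), hassoc u v w]

end

theorem symplectic_associative_fourth_power_zero_general
    {k U : Type*} [Field k] [AddCommGroup U] [Module k U]
    (h2 : (2 : k) ≠ 0)
    (mul : U →ₗ[k] U →ₗ[k] U)
    (hassoc : ∀ u v w : U, mul (mul u v) w = mul u (mul v w))
    (ω : U →ₗ[k] U →ₗ[k] k)
    (hnd : ∀ u : U, (∀ v : U, ω u v = 0) → u = 0)
    (hinv : ∀ u v w : U, ω (mul u v) w + ω v (mul u w) = 0)
    (u v w x : U) :
    mul u (mul v (mul w x)) = 0 := by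
  rw [← hassoc v, ← hassoc u, ← hassoc u v]
  have h := mul_mul_mul_apply_eq_neg_self hassoc hnd hinv u v w x
  refine (smul_eq_zero.mp ?_).resolve_left h2
  rw [two_smul]
  exact eq_neg_iff_add_eq_zero.mp h

/-- In a symplectic associative algebra, `U⁴ = 0`: any product of four elements
vanishes. -/
theorem symplectic_associative_fourth_power_zero
    {k U : Type*} [Field k] [AddCommGroup U] [Module k U]
    [FiniteDimensional k U]
    (h2 : (2 : k) ≠ 0)
    (mul : U →ₗ[k] U →ₗ[k] U)
    (hassoc : ∀ u v w : U, mul (mul u v) w = mul u (mul v w))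
    (ω : U →ₗ[k] U →ₗ[k] k)
    (hskew : ∀ u v : U, ω u v = - ω v u)
    (hnd : ∀ u : U, (∀ v : U, ω u v = 0) → u = 0)
    (hinv : ∀ u v w : U, ω (mul u v) w + ω v (mul u w) = 0)
    (u v w x : U) :
    mul u (mul v (mul w x)) = 0 :=
  symplectic_associative_fourth_power_zero_general h2 mul hassoc ω hnd hinv u v w x
end

section
/- Let (U,·,ω) be an abelian (commutative) symplectic associative algebra: · is associative and commutative, ω is nondegenerate skew-symmetric with ω(u·v,w) + ω(v,u·w) = 0. Then U²·U² = 0 and ω(U²,U²) = 0; in particular (u·v)·(w·x) = 0 and ω(u·v, w·x) = 0 for all u,v,w,x. -/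
/-!
The quadrilinear form `g(a,b,c,d) = ω((a·b)·c, d)` is invariant under `(a,b,c,d) ↦ (b,a,d,c)`,
by commutativity and the symmetry `ω(a·b, c) = ω(a·c, b)`, but it also changes sign under this
swap, since invariance moves the factors `a` and `b` across `ω` one at a time. In characteristic
`≠ 2` it vanishes, so every triple product lies in the radical of `ω`, which is zero. Both claims
then follow by writing `(u·v)·(w·x)` and `ω(u·v, w·x)` in terms of triple products.
-/

section SymplecticAlgebra

variable {k U : Type*} [CommRing k] [AddCommGroup U] [Module k U]
  {mul : U →ₗ[k] U →ₗ[k] U} {ω : U →ₗ[k] U →ₗ[k] k}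

theorem omega_mul_swap_right (hskew : ∀ u v : U, ω u v = -ω v u)
    (hinv : ∀ u v w : U, ω (mul u v) w + ω v (mul u w) = 0) (a b c : U) :
    ω (mul a b) c = ω (mul a c) b := by
  linear_combination hinv a b c - hskew b (mul a c)

theorem omega_triple_product_eq_zero [NoZeroDivisors k] (h2 : (2 : k) ≠ 0)
    (hassoc : ∀ u v w : U, mul (mul u v) w = mul u (mul v w))
    (hcomm : ∀ u v : U, mul u v = mul v u)
    (hskew : ∀ u v : U, ω u v = -ω v u)
    (hinv : ∀ u v w : U, ω (mul u v) w + ω v (mul u w) = 0) (a b c d : U) :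
    ω (mul (mul a b) c) d = 0 := by
  have h_invariant : ω (mul (mul a b) c) d = ω (mul (mul b a) d) c := by
    rw [hcomm a b, omega_mul_swap_right hskew hinv]
  have h_antiinvariant : ω (mul (mul a b) c) d = -ω (mul (mul b a) d) c := by
    rw [hassoc a b c, hassoc b a d]
    linear_combination hinv a (mul b c) d - hinv b c (mul a d) + hskew c (mul b (mul a d))
  have h_double : (2 : k) * ω (mul (mul a b) c) d = 0 := by
    linear_combination h_invariant + h_antiinvariant
  exact (mul_eq_zero.mp h_double).resolve_left h2

end SymplecticAlgebra

theorem abelian_symplectic_associative_square_general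
    {k U : Type*} [Field k] [AddCommGroup U] [Module k U]
    (h2 : (2 : k) ≠ 0)
    (mul : U →ₗ[k] U →ₗ[k] U)
    (hassoc : ∀ u v w : U, mul (mul u v) w = mul u (mul v w))
    (hcomm : ∀ u v : U, mul u v = mul v u)
    (ω : U →ₗ[k] U →ₗ[k] k)
    (hskew : ∀ u v : U, ω u v = - ω v u)
    (hnd : ∀ u : U, (∀ v : U, ω u v = 0) → u = 0)
    (hinv : ∀ u v w : U, ω (mul u v) w + ω v (mul u w) = 0)
    (u v w x : U) :
    mul (mul u v) (mul w x) = 0 ∧ ω (mul u v) (mul w x) = 0 := by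
  have htriple := omega_triple_product_eq_zero h2 hassoc hcomm hskew hinv
  refine ⟨hnd _ fun y => ?_, ?_⟩
  · rw [← hassoc]
    exact htriple (mul u v) w x y
  · have hmove := hinv u v (mul w x)
    rw [← hassoc u w x, hskew v, htriple u w x v] at hmove
    simpa using hmove

/-- In a commutative symplectic associative algebra, `U²·U² = 0` and `ω(U²,U²) = 0`:
`(u·v)·(w·x) = 0` and `ω(u·v, w·x) = 0` for all `u,v,w,x`. -/
theorem abelian_symplectic_associative_square
    {k U : Type*} [Field k] [AddCommGroup U] [Module k U]
    [FiniteDimensional k U]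
    (h2 : (2 : k) ≠ 0)
    (mul : U →ₗ[k] U →ₗ[k] U)
    (hassoc : ∀ u v w : U, mul (mul u v) w = mul u (mul v w))
    (hcomm : ∀ u v : U, mul u v = mul v u)
    (ω : U →ₗ[k] U →ₗ[k] k)
    (hskew : ∀ u v : U, ω u v = - ω v u)
    (hnd : ∀ u : U, (∀ v : U, ω u v = 0) → u = 0)
    (hinv : ∀ u v w : U, ω (mul u v) w + ω v (mul u w) = 0)
    (u v w x : U) :
    mul (mul u v) (mul w x) = 0 ∧ ω (mul u v) (mul w x) = 0 :=
  abelian_symplectic_associative_square_general h2 mul hassoc hcomm ω hskew hnd hinv u v w x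
end
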